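/- arXiv:2108.00059 — 2 statements merged into one kernel-verified Lean document; each statement's English description precedes it below -/
import Mathlib

section
/- Let H be a graph and let G be a connected H-minimal graph. Then there exists a model (V_h)_{h in V(H)} of H in G such that: (1) for every vertex h of H of degree 1 in H, the set V_h is a singleton; and (2) for every vertex h of H of degree 2 in H with neighbors h' and h'', the subgraph of G induced by V_h is a path such that only one endpoint of the path has neighbors in V_{h'}, only the other endpoint has neighbors in V_{h''}, and no other vertex of V_h has a neighbor in V_{h'} ∪ V_{h''}. -/
open SimpleGraph

variable {α β : Type*}

/-- A model of `H` in `G`: a family of pairwise disjoint nonempty vertex subsets of `G`,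
each inducing a connected subgraph, such that for every edge `h h'` of `H` there is an
edge of `G` between `V h` and `V h'`. -/
def IsMinorModel (G : SimpleGraph α) (H : SimpleGraph β) (V : β → Set α) : Prop :=
  (∀ h, (V h).Nonempty) ∧
  (Pairwise fun h h' => Disjoint (V h) (V h')) ∧
  (∀ h, (G.induce (V h)).Connected) ∧
  ∀ h h', H.Adj h h' → ∃ x ∈ V h, ∃ y ∈ V h', G.Adj x y

/-- `H` is a minor of `G`. -/
def HasMinor (G : SimpleGraph α) (H : SimpleGraph β) : Prop :=
  ∃ V : β → Set α, IsMinorModel G H V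

/-- `G` is `H`-minimal: `H` is a minor of `G`, but for every vertex `x` of `G`,
`H` is not a minor of `G − x`. -/
def MinorMinimal (G : SimpleGraph α) (H : SimpleGraph β) : Prop :=
  HasMinor G H ∧ ∀ x : α, ¬ HasMinor (G.induce {y | y ≠ x}) H

/-- A graph is 2-connected if it has at least 3 vertices, is connected, and stays
connected after deleting any single vertex. -/
def TwoConnected [Fintype α] (G : SimpleGraph α) : Prop :=
  3 ≤ Fintype.card α ∧ G.Connected ∧ ∀ v : α, (G.induce {w | w ≠ v}).Connected

/-- `G` is a cycle: connected and 2-regular. -/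
def IsCycleGraph (G : SimpleGraph α) : Prop :=
  G.Connected ∧ ∀ v : α, (G.neighborSet v).ncard = 2

/-- In a connected graph, given nonempty vertex sets `A` and `B`, there is a shortest
"A-B path": an induced path whose only vertex in `A` is its start and whose only
vertex in `B` is its end. -/
lemma exists_min_path {V : Type*} {Γ : SimpleGraph V} (hc : Γ.Connected)
    {A B : Set V} (hA : A.Nonempty) (hB : B.Nonempty) :
    ∃ (n : ℕ) (g : ℕ → V),
      g 0 ∈ A ∧ g n ∈ B ∧
      (∀ i j, i ≤ n → j ≤ n → (Γ.Adj (g i) (g j) ↔ (i + 1 = j ∨ j + 1 = i))) ∧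
      (∀ i j, i ≤ n → j ≤ n → g i = g j → i = j) ∧
      (∀ i, i ≤ n → g i ∈ A → i = 0) ∧
      (∀ i, i ≤ n → g i ∈ B → i = n) := by
  classical
  set P : ℕ → Prop := fun n => ∃ g : ℕ → V, g 0 ∈ A ∧ g n ∈ B ∧
    ∀ i, i < n → Γ.Adj (g i) (g (i + 1)) with hP
  obtain ⟨a, ha⟩ := hA
  obtain ⟨b, hb⟩ := hB
  have hex : ∃ n, P n := by
    obtain ⟨w⟩ := hc.preconnected a b
    exact ⟨w.length, w.getVert, by simpa using ha, by simpa using hb,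
      fun i hi => w.adj_getVert_succ hi⟩
  let n := Nat.find hex
  obtain ⟨g, hg0, hgn, hgadj⟩ : P n := Nat.find_spec hex
  have hmin : ∀ m, m < n → ¬ P m := fun m hm => Nat.find_min hex hm
  have hadj : ∀ i, i < n → Γ.Adj (g i) (g (i + 1)) := hgadj
  have hAonly : ∀ i, i ≤ n → g i ∈ A → i = 0 := by
    intro i hi hgiA
    by_contra h0
    have hipos : 0 < i := Nat.pos_of_ne_zero h0
    refine hmin (n - i) (Nat.sub_lt (lt_of_lt_of_le hipos hi) hipos) ?_
    refine ⟨fun k => g (k + i), by simpa using hgiA, ?_, ?_⟩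
    · show g (n - i + i) ∈ B
      rw [Nat.sub_add_cancel hi]; exact hgn
    · intro k hk
      have : k + i < n := by omega
      simpa [Nat.add_right_comm k i 1] using hadj (k + i) this
  have hBonly : ∀ i, i ≤ n → g i ∈ B → i = n := by
    intro i hi hgiB
    by_contra h0
    have hilt : i < n := lt_of_le_of_ne hi h0
    exact hmin i hilt ⟨g, hg0, hgiB, fun k hk => hadj k (lt_trans hk hilt)⟩
  have hinj : ∀ i j, i < j → j ≤ n → g i ≠ g j := by
    intro i j hij hj heq
    set d := j - i with hd
    have hd1 : 1 ≤ d := by omega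
    refine hmin (n - d) (by omega) ?_
    refine ⟨fun k => if k ≤ i then g k else g (k + d), by simp [hg0], ?_, ?_⟩
    · by_cases hcase : n - d ≤ i
      · have hni : n - d = i := by omega
        have : g (n - d) = g n := by
          rw [hni, heq]; congr 1; omega
        simpa [hcase, this] using hgn
      · have : n - d + d = n := by omega
        simpa [hcase, this] using hgn
    · intro k hk
      rcases lt_trichotomy k i with hki | hki | hki
      · have hk1 : k + 1 ≤ i := hki
        simpa [le_of_lt hki, hk1] using hadj k (by omega)
      · subst hki
        have h1 : ¬ (k + 1 ≤ k) := by omega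
        have : g k = g (k + d) := by rw [heq]; congr 1; omega
        simp only [le_refl, if_pos, h1, if_neg]
        rw [this]
        have : k + 1 + d = k + d + 1 := by omega
        rw [this]
        exact hadj (k + d) (by omega)
      · have h1 : ¬ (k ≤ i) := by omega
        have h2 : ¬ (k + 1 ≤ i) := by omega
        have : k + 1 + d = k + d + 1 := by omega
        simp only [h1, if_neg, h2, this]
        exact hadj (k + d) (by omega)
  have hchord : ∀ i j, i + 1 < j → j ≤ n → ¬ Γ.Adj (g i) (g j) := by
    intro i j hij hj hadjij
    set d := j - i - 1 with hd
    have hd1 : 1 ≤ d := by omega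
    refine hmin (n - d) (by omega) ?_
    refine ⟨fun k => if k ≤ i then g k else g (k + d), by simp [hg0], ?_, ?_⟩
    · have h1 : ¬ (n - d ≤ i) := by omega
      have : n - d + d = n := by omega
      simpa [h1, this] using hgn
    · intro k hk
      rcases lt_trichotomy k i with hki | hki | hki
      · have hk1 : k + 1 ≤ i := hki
        simpa [le_of_lt hki, hk1] using hadj k (by omega)
      · subst hki
        have h1 : ¬ (k + 1 ≤ k) := by omega
        have h2 : k + 1 + d = j := by omega
        simp only [le_refl, if_pos, h1, if_neg, h2]
        exact hadjij
      · have h1 : ¬ (k ≤ i) := by omega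
        have h2 : ¬ (k + 1 ≤ i) := by omega
        have h3 : k + 1 + d = k + d + 1 := by omega
        simp only [h1, if_neg, h2, h3]
        exact hadj (k + d) (by omega)
  refine ⟨n, g, hg0, hgn, ?_, ?_, hAonly, hBonly⟩
  · intro i j hi hj
    constructor
    · intro hadjij
      rcases lt_trichotomy i j with hij | hij | hij
      · left
        by_contra hne
        exact hchord i j (by omega) hj hadjij
      · exact absurd hadjij (by simp [hij])
      · right
        by_contra hne
        exact hchord j i (by omega) hi hadjij.symm
    · rintro (rfl' | rfl')
      · have : i < n := by omega
        have := hadj i this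
        rwa [rfl'] at this
      · have : j < n := by omega
        have := hadj j this
        rw [rfl'] at this
        exact this.symm
  · intro i j hi hj heq
    rcases lt_trichotomy i j with hij | hij | hij
    · exact absurd heq (hinj i j hij hj)
    · exact hij
    · exact absurd heq.symm (hinj j i hij hi)

/-- Iso between a doubly-induced subgraph and the singly-induced one. -/
def induceInduceIso (G : SimpleGraph α) {s t : Set α} (hts : t ⊆ s) :
    (G.induce s).induce (Subtype.val ⁻¹' t) ≃g G.induce t where
  toFun x := ⟨x.1.1, x.2⟩
  invFun x := ⟨⟨x.1, hts x.2⟩, x.2⟩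
  left_inv _ := rfl
  right_inv _ := rfl
  map_rel_iff' := Iff.rfl

lemma induce_singleton_connected (G : SimpleGraph α) (x : α) :
    (G.induce {x}).Connected := by
  haveI : Nonempty ({x} : Set α) := ⟨⟨x, rfl⟩⟩
  refine ⟨fun u v => ?_⟩
  have : u = v := Subtype.ext (u.2.trans v.2.symm)
  exact this ▸ Reachable.refl u

/-- Every model of a minor-minimal pair covers all vertices. -/
lemma IsMinorModel.covers {G : SimpleGraph α} {H : SimpleGraph β}
    (hmin : MinorMinimal G H) {W : β → Set α} (hW : IsMinorModel G H W) (y : α) :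
    ∃ h, y ∈ W h := by
  by_contra hy
  push_neg at hy
  apply hmin.2 y
  have hsub : ∀ h, W h ⊆ {z | z ≠ y} := by
    intro h x hx hxy
    exact hy h (hxy ▸ hx)
  refine ⟨fun h => Subtype.val ⁻¹' W h, fun h => ?_, fun a b hab => (hW.2.1 hab).preimage _,
    fun h => ((induceInduceIso G (hsub h)).connected_iff).mpr (hW.2.2.1 h), ?_⟩
  · obtain ⟨x, hx⟩ := hW.1 h
    exact ⟨⟨x, hsub h hx⟩, hx⟩
  · intro a b hab
    obtain ⟨x, hx, z, hz, hxz⟩ := hW.2.2.2 a b hab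
    exact ⟨⟨x, hsub a hx⟩, hx, ⟨z, hsub b hz⟩, hz, hxz⟩

/-- Every connected `H`-minimal graph `G` admits a model `(V h)` of `H` such that:
(1) `V h` is a singleton whenever `h` has degree 1 in `H`; and (2) whenever `h` has
degree 2 in `H` with neighbors `h'` and `h''`, the subgraph of `G` induced by `V h`
is a path, the only vertex of `V h` with a neighbor in `V h'` is one endpoint of the
path, and the only vertex of `V h` with a neighbor in `V h''` is the other endpoint. -/
theorem minorMinimal_model_low_degree (G : SimpleGraph α) (H : SimpleGraph β)
    (hconn : G.Connected) (hmin : MinorMinimal G H) :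
    ∃ V : β → Set α, IsMinorModel G H V ∧
      (∀ h h', H.Adj h h' → (∀ h₀, H.Adj h h₀ → h₀ = h') → ∃ x, V h = {x}) ∧
      (∀ h h' h'', H.Adj h h' → H.Adj h h'' → h' ≠ h'' →
        (∀ h₀, H.Adj h h₀ → h₀ = h' ∨ h₀ = h'') →
        ∃ (n : ℕ) (f : Fin (n + 1) ≃ (V h)),
          (∀ i j, (G.induce (V h)).Adj (f i) (f j) ↔
            ((i : ℕ) + 1 = (j : ℕ) ∨ (j : ℕ) + 1 = (i : ℕ))) ∧
          {x : α | x ∈ V h ∧ ∃ y ∈ V h', G.Adj x y} = {(f 0 : α)} ∧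
          {x : α | x ∈ V h ∧ ∃ y ∈ V h'', G.Adj x y} = {(f (Fin.last n) : α)}) := by
  classical
  obtain ⟨V, hVne, hVdisj, hVconn, hVedge⟩ := hmin.1
  have hVmodel : IsMinorModel G H V := ⟨hVne, hVdisj, hVconn, hVedge⟩
  -- the shrinking principle: replacing `V h` by a smaller branch set `S` in a valid
  -- model forces `V h = S`, since all vertices must be covered.
  have shrink : ∀ (h : β) (S : Set α), S ⊆ V h →
      IsMinorModel G H (fun c => if c = h then S else V c) → V h = S := by
    intro h S hS hW
    refine Set.Subset.antisymm ?_ hS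
    intro z hz
    obtain ⟨h₀, hz₀⟩ := hW.covers hmin z
    by_cases he : h₀ = h
    · subst he; simpa using hz₀
    · exfalso
      have hzV : z ∈ V h₀ := by simpa [he] using hz₀
      exact Set.disjoint_left.mp (hVdisj he) hzV hz
  refine ⟨V, hVmodel, ?_, ?_⟩
  · -- degree-one vertices
    intro h h' hadj huniq
    obtain ⟨x, hx, y, hy, hxy⟩ := hVedge h h' hadj
    have hne' : h' ≠ h := hadj.ne'
    have hWmod : IsMinorModel G H (fun c => if c = h then {x} else V c) := by
      have hsub : ∀ c, (if c = h then ({x} : Set α) else V c) ⊆ V c := by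
        intro c z hz
        by_cases hc : c = h
        · subst hc; simp only [if_pos rfl, Set.mem_singleton_iff] at hz; exact hz ▸ hx
        · simpa [hc] using hz
      refine ⟨fun c => ?_, fun a b hab => (hVdisj hab).mono (hsub a) (hsub b),
        fun c => ?_, ?_⟩
      · by_cases hc : c = h <;> simp [hc, hVne c]
      · show (G.induce (if c = h then ({x} : Set α) else V c)).Connected
        by_cases hc : c = h
        · rw [show (if c = h then ({x} : Set α) else V c) = {x} from if_pos hc]
          exact induce_singleton_connected G x
        · rw [show (if c = h then ({x} : Set α) else V c) = V c from if_neg hc]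
          exact hVconn c
      · intro a b hab
        by_cases hah : a = h
        · subst hah
          have hb : b = h' := huniq b hab
          subst hb
          exact ⟨x, by simp, y, by simp [hne', hy], hxy⟩
        · by_cases hbh : b = h
          · subst hbh
            have ha' : a = h' := huniq a hab.symm
            subst ha'
            exact ⟨y, by simp [hne', hy], x, by simp, hxy.symm⟩
          · obtain ⟨u, hu, v, hv, huv⟩ := hVedge a b hab
            exact ⟨u, by simp [hah, hu], v, by simp [hbh, hv], huv⟩
    exact ⟨x, shrink h {x} (Set.singleton_subset_iff.mpr hx) hWmod⟩
  · -- degree-two vertices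
    intro h h' h'' hadj' hadj'' hne huniq
    have hne' : h' ≠ h := hadj'.ne'
    have hne'' : h'' ≠ h := hadj''.ne'
    have hAne : ({x : ↥(V h) | ∃ y ∈ V h', G.Adj x.1 y}).Nonempty := by
      obtain ⟨x, hx, y, hy, hxy⟩ := hVedge h h' hadj'
      exact ⟨⟨x, hx⟩, y, hy, hxy⟩
    have hBne : ({x : ↥(V h) | ∃ y ∈ V h'', G.Adj x.1 y}).Nonempty := by
      obtain ⟨x, hx, y, hy, hxy⟩ := hVedge h h'' hadj''
      exact ⟨⟨x, hx⟩, y, hy, hxy⟩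
    obtain ⟨n, g, hg0, hgn, hiff, hinj, hAonly, hBonly⟩ :=
      exists_min_path (hVconn h) hAne hBne
    set S : Set α := (fun i => (g i).val) '' Set.Iic n with hSdef
    have hSsub : S ⊆ V h := by
      rintro z ⟨i, hi, rfl⟩
      exact (g i).2
    have hg0S : (g 0).val ∈ S := ⟨0, Nat.zero_le n, rfl⟩
    have hgnS : (g n).val ∈ S := ⟨n, le_refl n, rfl⟩
    have hSconn : (G.induce S).Connected := by
      haveI : Nonempty S := ⟨⟨(g 0).val, hg0S⟩⟩
      refine ⟨?_⟩
      have key : ∀ i, i ≤ n → ∀ (hu : (g 0).val ∈ S) (hv : (g i).val ∈ S),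
          (G.induce S).Reachable ⟨(g 0).val, hu⟩ ⟨(g i).val, hv⟩ := by
        intro i
        induction i with
        | zero => intro _ hu hv; exact Reachable.refl _
        | succ k ih =>
          intro hk hu hv
          have hk' : k ≤ n := Nat.le_of_succ_le hk
          have hmem : (g k).val ∈ S := ⟨k, hk', rfl⟩
          have hadjk : G.Adj (g k).val (g (k + 1)).val :=
            (hiff k (k + 1) hk' hk).mpr (Or.inl rfl)
          exact (ih hk' hu hmem).trans
            (Adj.reachable (by exact hadjk :
              (G.induce S).Adj ⟨(g k).val, hmem⟩ ⟨(g (k + 1)).val, hv⟩))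
      rintro ⟨u, i, hi, rfl⟩ ⟨v, j, hj, rfl⟩
      exact (key i hi hg0S _).symm.trans (key j hj hg0S _)
    have hWmod : IsMinorModel G H (fun c => if c = h then S else V c) := by
      have hsub : ∀ c, (if c = h then S else V c) ⊆ V c := by
        intro c z hz
        by_cases hc : c = h
        · subst hc; simp only [if_pos rfl] at hz; exact hSsub hz
        · simpa [hc] using hz
      refine ⟨fun c => ?_, fun a b hab => (hVdisj hab).mono (hsub a) (hsub b),
        fun c => ?_, ?_⟩
      · by_cases hc : c = h
        · subst hc; exact ⟨(g 0).val, by simpa using hg0S⟩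
        · simpa [hc] using hVne c
      · show (G.induce (if c = h then S else V c)).Connected
        by_cases hc : c = h
        · rw [show (if c = h then S else V c) = S from if_pos hc]
          exact hSconn
        · rw [show (if c = h then S else V c) = V c from if_neg hc]
          exact hVconn c
      · intro a b hab
        by_cases hah : a = h
        · subst hah
          rcases huniq b hab with rfl | rfl
          · obtain ⟨y, hy, hxy⟩ := hg0
            exact ⟨(g 0).val, by simpa using hg0S, y, by simp [hne', hy], hxy⟩
          · obtain ⟨y, hy, hxy⟩ := hgn
            exact ⟨(g n).val, by simpa using hgnS, y, by simp [hne'', hy], hxy⟩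
        · by_cases hbh : b = h
          · subst hbh
            rcases huniq a hab.symm with rfl | rfl
            · obtain ⟨y, hy, hxy⟩ := hg0
              exact ⟨y, by simp [hne', hy], (g 0).val, by simpa using hg0S, hxy.symm⟩
            · obtain ⟨y, hy, hxy⟩ := hgn
              exact ⟨y, by simp [hne'', hy], (g n).val, by simpa using hgnS, hxy.symm⟩
          · obtain ⟨u, hu, v, hv, huv⟩ := hVedge a b hab
            exact ⟨u, by simp [hah, hu], v, by simp [hbh, hv], huv⟩
    have hVS : V h = S := shrink h S hSsub hWmod
    have hbij : Function.Bijective (fun i : Fin (n + 1) => g i.val) := by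
      constructor
      · intro i j hij
        exact Fin.ext (hinj i.val j.val (Nat.lt_succ_iff.mp i.2)
          (Nat.lt_succ_iff.mp j.2) hij)
      · intro x
        have hx : x.val ∈ S := hVS ▸ x.2
        obtain ⟨i, hi, hix⟩ := hx
        exact ⟨⟨i, Nat.lt_succ_of_le hi⟩, Subtype.ext hix⟩
    refine ⟨n, Equiv.ofBijective _ hbij, ?_, ?_, ?_⟩
    · intro i j
      exact hiff i.val j.val (Nat.lt_succ_iff.mp i.2) (Nat.lt_succ_iff.mp j.2)
    · ext x
      simp only [Set.mem_setOf_eq, Set.mem_singleton_iff]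
      constructor
      · rintro ⟨hxV, y, hy, hxy⟩
        have hxS : x ∈ S := hVS ▸ hxV
        obtain ⟨i, hi, rfl⟩ := hxS
        have hi0 : i = 0 := hAonly i hi ⟨y, hy, hxy⟩
        subst hi0
        rfl
      · rintro rfl
        obtain ⟨y, hy, hxy⟩ := hg0
        exact ⟨(g 0).2, y, hy, hxy⟩
    · ext x
      simp only [Set.mem_setOf_eq, Set.mem_singleton_iff]
      constructor
      · rintro ⟨hxV, y, hy, hxy⟩
        have hxS : x ∈ S := hVS ▸ hxV
        obtain ⟨i, hi, rfl⟩ := hxS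
        have hin : i = n := hBonly i hi ⟨y, hy, hxy⟩
        subst hin
        rfl
      · rintro rfl
        obtain ⟨y, hy, hxy⟩ := hgn
        exact ⟨(g n).2, y, hy, hxy⟩
end

section
/- Every connected paw-minimal graph consists of an induced cycle plus exactly one additional vertex (which, by connectivity, has at least one neighbor on the cycle). -/
open SimpleGraph

variable {α β : Type*}

/-- The paw: a triangle `0,1,2` together with one additional vertex `3` adjacent to
exactly one vertex of the triangle. -/
def pawGraph : SimpleGraph (Fin 4) :=
  fromEdgeSet {s(0, 1), s(0, 2), s(1, 2), s(2, 3)}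

/-!
A graph has a paw minor as soon as it contains a cycle `C` and, in the same component, a
vertex off `C`: the last vertex `x` before `C` on a walk to `C` is adjacent to some `y` on `C`,
and `{y}`, `{x}`, the successor of `y` on `C` and the rest of `C` form a paw model. Conversely,
the triangle of a paw model carries a cycle that misses the fourth branch set.

So a connected paw-minimal graph has a cycle `C` and a vertex `w` off it. Of two vertices off
`C`, one could be deleted while the other stays joined to `C`, so `w` is the only one. A chord of
`C` would cut off a shorter cycle missing a vertex of `C`, which is still joined to it inside
`C`, so `w` could be deleted. Hence `G - w` is the cycle `C`, and `C` is induced.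
-/

section

variable {G : SimpleGraph α}

namespace SimpleGraph

theorem exists_walk_support_subset_of_preconnected_induce {A : Set α}
    (hA : (G.induce A).Preconnected) {a b : α} (ha : a ∈ A) (hb : b ∈ A) :
    ∃ p : G.Walk a b, ∀ x ∈ p.support, x ∈ A := by
  obtain ⟨p⟩ := hA ⟨a, ha⟩ ⟨b, hb⟩
  refine ⟨p.map (Embedding.induce A).toHom, fun x hx => ?_⟩
  obtain ⟨x, -, rfl⟩ := List.mem_map.mp ((p.support_map _) ▸ hx)
  exact x.2

namespace Walk

theorem IsPath.start_notMem_support_dropUntil [DecidableEq α] {u v w : α} {p : G.Walk u v}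
    (hp : p.IsPath) (hw : w ∈ p.support) (hwu : w ≠ u) : u ∉ (p.dropUntil w hw).support := by
  intro hu
  have hnodup := hp.support_nodup
  rw [← p.take_spec hw, support_append] at hnodup
  rw [← cons_tail_support, List.mem_cons] at hu
  exact List.disjoint_of_nodup_append hnodup (p.takeUntil w hw).start_mem_support
    (hu.resolve_left hwu.symm)

theorem exists_isCycle_of_adj_of_notMem_edges {a b : α} (h : G.Adj b a) (p : G.Walk a b)
    (hp : s(b, a) ∉ p.edges) : ∃ K : G.Walk b b, K.IsCycle ∧ ∀ x ∈ K.support, x ∈ p.support := by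
  classical
  refine ⟨cons h p.bypass, (cons_isCycle_iff _ h).mpr
    ⟨p.bypass_isPath, fun he => hp (p.edges_bypass_subset_edges he)⟩, fun x hx => ?_⟩
  rcases List.mem_cons.mp hx with rfl | hx
  · exact p.end_mem_support
  · exact p.support_bypass_subset_support hx

theorem IsCycle.exists_isCycle_of_isChord [DecidableEq α] {u a b : α} {C : G.Walk u u}
    (hC : C.IsCycle) (hab : C.IsChord s(a, b)) :
    ∃ C' : G.Walk a a, C'.IsCycle ∧ (∀ x ∈ C'.support, x ∈ C.support) ∧
      ∃ z ∈ C.support, z ∉ C'.support := by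
  obtain ⟨hadj, hnot, ha, hb⟩ := isChord_sym2Mk.mp hab
  obtain ⟨D, hD, hDsupp, hDedges⟩ : ∃ D : G.Walk a a, D.IsCycle ∧
      (∀ x, x ∈ D.support ↔ x ∈ C.support) ∧ s(a, b) ∉ D.edges :=
    ⟨C.rotate a ha, hC.rotate ha, fun x => C.mem_support_rotate_iff a ha,
      by rwa [(C.rotate_edges a ha).mem_iff]⟩
  cases D with
  | nil => exact absurd hD not_isCycle_nil
  | @cons _ c _ hac q =>
    have hq : q.IsPath := ((cons_isCycle_iff q hac).mp hD).1
    have hbq : b ∈ q.support := by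
      have := (hDsupp b).mpr hb
      rw [support_cons, List.mem_cons] at this
      exact this.resolve_left hadj.ne'
    have hbc : b ≠ c := by
      rintro rfl
      exact hDedges (by simp)
    refine ⟨cons hadj (q.dropUntil b hbq), (cons_isCycle_iff _ hadj).mpr
      ⟨hq.dropUntil hbq, fun he => hDedges ?_⟩, fun x hx => ?_, c, ?_, ?_⟩
    · exact List.mem_cons_of_mem _ (q.edges_dropUntil_subset_edges hbq he)
    · rw [support_cons, List.mem_cons] at hx
      rcases hx with rfl | hx
      · exact ha
      · exact (hDsupp x).mp (List.mem_cons_of_mem _ (q.support_dropUntil_subset_support hbq hx))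
    · exact (hDsupp c).mp (by simp)
    · rw [support_cons, List.mem_cons, not_or]
      exact ⟨hac.ne', hq.start_notMem_support_dropUntil hbq hbc⟩

/-- `K` runs `y, v, b, …, a, y`, and `r` is its stretch from `a` back to `b`. -/
theorem IsCycle.exists_adj_adj_walk {y : α} {K : G.Walk y y} (hK : K.IsCycle) :
    ∃ (v a b : α) (r : G.Walk a b), G.Adj y v ∧ G.Adj y a ∧ G.Adj v b ∧
      y ∉ r.support ∧ v ∉ r.support ∧ v ∈ K.support ∧ ∀ x ∈ r.support, x ∈ K.support := by
  cases K with
  | nil => exact absurd hK not_isCycle_nil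
  | @cons _ v _ hyv q =>
  cases q with
  | nil => exact absurd rfl hyv.ne
  | @cons _ a _ hva q' =>
  rw [cons_isCycle_iff, cons_isPath_iff] at hK
  obtain ⟨⟨hq', hvq'⟩, hedge⟩ := hK
  have hya : y ≠ a := by
    rintro rfl
    exact hedge (by simp [Sym2.eq_swap])
  obtain ⟨b, hyb, r, hr⟩ := q'.reverse.exists_eq_cons_of_ne hya
  have hrev : (cons hyb r).IsPath := hr ▸ hq'.reverse
  have hrq' : ∀ x ∈ r.support, x ∈ q'.support := by
    intro x hx
    have : x ∈ q'.reverse.support := hr ▸ List.mem_cons_of_mem _ hx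
    simpa using this
  exact ⟨v, b, a, r, hyv, hyb, hva, ((cons_isPath_iff _ _).mp hrev).2,
    fun hx => hvq' (hrq' _ hx), by simp, fun x hx => by simp [hrq' x hx]⟩

theorem IsCycle.isCycleGraph_induce_support {u : α} {K : G.Walk u u} (hK : K.IsCycle)
    (hK' : K.IsChordless) : IsCycleGraph (G.induce {x | x ∈ K.support}) := by
  refine ⟨K.connected_induce_support, fun v => ?_⟩
  have hnbr : (G.induce {x | x ∈ K.support}).neighborSet v =
      Subtype.val ⁻¹' K.toSubgraph.neighborSet v := by
    ext x
    simp only [mem_neighborSet, comap_adj, Function.Embedding.coe_subtype, Set.mem_preimage,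
      Subgraph.mem_neighborSet, adj_toSubgraph_iff_mem_edges]
    exact ⟨hK'.mem_edges v.2 x.2, fun h => K.adj_of_mem_edges h⟩
  rw [hnbr, Set.ncard_preimage_of_injective_subset_range Subtype.val_injective]
  · exact hK.ncard_neighborSet_toSubgraph_eq_two v.2
  · intro x hx
    exact ⟨⟨x, K.mem_verts_toSubgraph.mp (K.toSubgraph.edge_vert (Subgraph.adj_symm _ hx))⟩, rfl⟩

end Walk
end SimpleGraph

theorem IsMinorModel.hasMinor_induce {H : SimpleGraph β} {V : β → Set α} {S : Set α}
    (hV : IsMinorModel G H V) (hS : ∀ i, V i ⊆ S) : HasMinor (G.induce S) H := by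
  obtain ⟨hne, hdisj, hconn, hadj⟩ := hV
  refine ⟨fun i => Subtype.val ⁻¹' V i, fun i => ?_, fun i j hij => (hdisj hij).preimage _,
    fun i => ?_, fun i j hij => ?_⟩
  · obtain ⟨x, hx⟩ := hne i
    exact ⟨⟨x, hS i hx⟩, hx⟩
  · let f : G.induce (V i) →g (G.induce S).induce (Subtype.val ⁻¹' V i) :=
      ⟨fun x => ⟨⟨x, hS i x.2⟩, x.2⟩, fun h => h⟩
    exact (hconn i).map f fun ⟨⟨x, _⟩, hx⟩ => ⟨⟨x, hx⟩, rfl⟩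
  · obtain ⟨x, hx, y, hy, hxy⟩ := hadj i j hij
    exact ⟨⟨x, hS i hx⟩, hx, ⟨y, hS j hy⟩, hy, hxy⟩

theorem isMinorModel_pawGraph {V : Fin 4 → Set α} (hne : ∀ i, (V i).Nonempty)
    (hdisj : Pairwise fun i j => Disjoint (V i) (V j)) (hconn : ∀ i, (G.induce (V i)).Connected)
    (h01 : ∃ x ∈ V 0, ∃ y ∈ V 1, G.Adj x y) (h02 : ∃ x ∈ V 0, ∃ y ∈ V 2, G.Adj x y)
    (h12 : ∃ x ∈ V 1, ∃ y ∈ V 2, G.Adj x y) (h23 : ∃ x ∈ V 2, ∃ y ∈ V 3, G.Adj x y) :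
    IsMinorModel G pawGraph V := by
  have symm : ∀ {i j}, (∃ x ∈ V i, ∃ y ∈ V j, G.Adj x y) → ∃ x ∈ V j, ∃ y ∈ V i, G.Adj x y :=
    fun ⟨x, hx, y, hy, h⟩ => ⟨y, hy, x, hx, h.symm⟩
  refine ⟨hne, hdisj, hconn, fun i j hij => ?_⟩
  fin_cases i <;> fin_cases j <;> simp [pawGraph] at hij <;> first | assumption | exact symm ‹_›

theorem exists_isMinorModel_pawGraph_of_isCycle_of_adj {y w : α} {K : G.Walk y y}
    (hK : K.IsCycle) (hw : w ∉ K.support) (hwy : G.Adj w y) :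
    ∃ V, IsMinorModel G pawGraph V ∧ ∀ i, V i ⊆ insert w {x | x ∈ K.support} := by
  obtain ⟨v, a, b, r, hyv, hya, hvb, hyr, hvr, hvK, hrK⟩ := hK.exists_adj_adj_walk
  have hwr : w ∉ r.support := fun h => hw (hrK w h)
  have hwv : w ≠ v := fun h => hw (h ▸ hvK)
  refine ⟨![{v}, {x | x ∈ r.support}, {y}, {w}], isMinorModel_pawGraph ?_ ?_ ?_
    ⟨v, rfl, b, r.end_mem_support, hvb⟩ ⟨v, rfl, y, rfl, hyv.symm⟩
    ⟨a, r.start_mem_support, y, rfl, hya.symm⟩ ⟨y, rfl, w, rfl, hwy.symm⟩, ?_⟩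
  · intro i
    fin_cases i
    exacts [⟨v, rfl⟩, ⟨a, r.start_mem_support⟩, ⟨y, rfl⟩, ⟨w, rfl⟩]
  · intro i j hij
    fin_cases i <;> fin_cases j <;> simp_all [hyv.ne, hwy.ne, Ne.symm]
  · intro i
    fin_cases i <;> dsimp
    exacts [.of_subsingleton, r.connected_induce_support, .of_subsingleton, .of_subsingleton]
  · intro i x hx
    fin_cases i <;> dsimp at hx
    · exact .inr (hx ▸ hvK)
    · exact .inr (hrK x hx)
    · exact .inr (hx ▸ K.start_mem_support)
    · exact .inl hx

theorem hasMinor_pawGraph_induce_ne_of_isCycle_of_walk {u z v x : α} {K : G.Walk u u}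
    (hK : K.IsCycle) (p : G.Walk z v) (hz : z ∉ K.support) (hv : v ∈ K.support)
    (hxK : x ∉ K.support) (hxp : x ∉ p.support) :
    HasMinor (G.induce {y | y ≠ x}) pawGraph := by
  classical
  obtain ⟨d, hd, hd₁, hd₂⟩ := p.exists_boundary_dart {y | y ∉ K.support} hz (by simpa using hv)
  obtain ⟨V, hV, hVsub⟩ := exists_isMinorModel_pawGraph_of_isCycle_of_adj
    (hK.rotate (not_not.mp hd₂)) (by simpa using hd₁) d.adj
  refine hV.hasMinor_induce fun i y hy hyx => ?_
  subst hyx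
  rcases hVsub i hy with rfl | hy
  · exact hxp (p.dart_fst_mem_support_of_mem_darts hd)
  · exact hxK ((K.mem_support_rotate_iff _ _).mp hy)

theorem exists_isCycle_of_hasMinor_pawGraph (h : HasMinor G pawGraph) :
    ∃ (w u : α) (K : G.Walk u u), K.IsCycle ∧ w ∉ K.support := by
  obtain ⟨V, hne, hdisj, hconn, hadj⟩ := h
  have hV : ∀ {i j}, i ≠ j → ∀ {x}, x ∈ V i → x ∉ V j := fun hij _ hx =>
    Set.disjoint_left.mp (hdisj hij) hx
  obtain ⟨a₀, ha₀, a₁, ha₁, h₀₁⟩ := hadj 0 1 (by simp [pawGraph])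
  obtain ⟨b₁, hb₁, b₂, hb₂, h₁₂⟩ := hadj 1 2 (by simp [pawGraph])
  obtain ⟨c₂, hc₂, c₀, hc₀, h₂₀⟩ := hadj 2 0 (by simp [pawGraph])
  have hwalk : ∀ i {a b}, a ∈ V i → b ∈ V i → ∃ p : G.Walk a b, ∀ x ∈ p.support, x ∈ V i :=
    fun i _ _ => exists_walk_support_subset_of_preconnected_induce (hconn i).preconnected
  obtain ⟨p₀, hp₀⟩ := hwalk 0 hc₀ ha₀
  obtain ⟨p₁, hp₁⟩ := hwalk 1 ha₁ hb₁
  obtain ⟨p₂, hp₂⟩ := hwalk 2 hb₂ hc₂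
  let W := p₀.append (.cons h₀₁ (p₁.append (.cons h₁₂ p₂)))
  have hW : ∀ x ∈ W.support, x ∈ V 0 ∨ x ∈ V 1 ∨ x ∈ V 2 := by
    intro x hx
    simp only [W, Walk.mem_support_append_iff, Walk.support_cons, List.mem_cons] at hx
    rcases hx with hx | rfl | hx | rfl | hx
    exacts [.inl (hp₀ x hx), .inl ha₀, .inr (.inl (hp₁ x hx)), .inr (.inl hb₁),
      .inr (.inr (hp₂ x hx))]
  have hWedge : s(c₂, c₀) ∉ W.edges := by
    intro he
    simp only [W, Walk.edges_append, Walk.edges_cons, List.mem_append, List.mem_cons,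
      Sym2.eq_iff] at he
    rcases he with he | (⟨rfl, -⟩ | ⟨rfl, -⟩) | he | (⟨-, rfl⟩ | ⟨-, rfl⟩) | he
    · exact hV (by decide) hc₂ (hp₀ _ (p₀.fst_mem_support_of_mem_edges he))
    · exact hV (by decide) hc₂ ha₀
    · exact hV (by decide) hc₂ ha₁
    · exact hV (by decide) hc₀ (hp₁ _ (p₁.snd_mem_support_of_mem_edges he))
    · exact hV (by decide) hc₀ hb₂
    · exact hV (by decide) hc₀ hb₁
    · exact hV (by decide) hc₀ (hp₂ _ (p₂.snd_mem_support_of_mem_edges he))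
  obtain ⟨K, hK, hKW⟩ := Walk.exists_isCycle_of_adj_of_notMem_edges h₂₀ W hWedge
  obtain ⟨w, hw⟩ := hne 3
  refine ⟨w, c₂, K, hK, fun hwK => ?_⟩
  rcases hW w (hKW w hwK) with h | h | h <;> exact hV (by decide) hw h

section Critical

variable (hcrit : ∀ x, ¬ HasMinor (G.induce {y | y ≠ x}) pawGraph)
include hcrit

theorem eq_of_notMem_support_of_isCycle (hG : G.Preconnected) {u a b : α} {K : G.Walk u u}
    (hK : K.IsCycle) (ha : a ∉ K.support) (hb : b ∉ K.support) : a = b := by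
  classical
  by_contra hab
  obtain ⟨p, hp⟩ := hG.exists_isPath a u
  by_cases hbp : b ∈ p.support
  · exact hcrit a (hasMinor_pawGraph_induce_ne_of_isCycle_of_walk hK (p.dropUntil b hbp) hb
      K.start_mem_support ha (hp.start_notMem_support_dropUntil hbp (Ne.symm hab)))
  · exact hcrit b
      (hasMinor_pawGraph_induce_ne_of_isCycle_of_walk hK p ha K.start_mem_support hb hbp)

theorem isChordless_of_isCycle_of_notMem_support {u w : α} {K : G.Walk u u} (hK : K.IsCycle)
    (hw : w ∉ K.support) : K.IsChordless := by
  classical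
  refine Walk.isChordless_iff_forall_mem_edges.mpr fun a b ha hb hab => by_contra fun hchord => ?_
  obtain ⟨C, hC, hCK, z, hzK, hzC⟩ :=
    hK.exists_isCycle_of_isChord (Walk.isChord_sym2Mk.mpr ⟨hab, hchord, ha, hb⟩)
  obtain ⟨q, hq⟩ := exists_walk_support_subset_of_preconnected_induce
    K.connected_induce_support.preconnected hzK ha
  exact hcrit w (hasMinor_pawGraph_induce_ne_of_isCycle_of_walk hC q hzC C.start_mem_support
    (fun h => hw (hCK w h)) (fun h => hw (hq w h)))

end Critical

end

theorem paw_minimal_general (G : SimpleGraph α) (hconn : G.Connected)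
    (hmin : MinorMinimal G pawGraph) :
    ∃ w : α, IsCycleGraph (G.induce {u | u ≠ w}) ∧ ∃ y : α, G.Adj w y := by
  obtain ⟨hminor, hcrit⟩ := hmin
  obtain ⟨w, u, K, hK, hw⟩ := exists_isCycle_of_hasMinor_pawGraph hminor
  have hsupp : {x | x ≠ w} = {x | x ∈ K.support} := by
    ext x
    refine ⟨fun hx => by_contra fun h => hx ?_, fun hx hxw => hw (hxw ▸ hx)⟩
    exact eq_of_notMem_support_of_isCycle hcrit hconn.preconnected hK h hw
  refine ⟨w, hsupp ▸ hK.isCycleGraph_induce_support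
    (isChordless_of_isCycle_of_notMem_support hcrit hK hw), ?_⟩
  obtain ⟨p⟩ := hconn.preconnected w u
  exact ⟨p.snd, p.adj_snd (Walk.not_nil_of_ne fun h => hw (h ▸ K.start_mem_support))⟩

/-- Every connected paw-minimal graph consists of an induced cycle plus exactly one
additional vertex, which has at least one neighbor on the cycle. -/
theorem paw_minimal (G : SimpleGraph α) [Fintype α] (hconn : G.Connected)
    (hmin : MinorMinimal G pawGraph) :
    ∃ w : α, IsCycleGraph (G.induce {u | u ≠ w}) ∧ ∃ y : α, G.Adj w y :=
  paw_minimal_general G hconn hmin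
end
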